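/- Let M be a matroid of rank r on ground set [n] and let μ be the uniform distribution over the bases of M, with marginals μᵢ. Assuming the basis generating polynomial of any matroid is log-concave on the positive orthant, we have max{(1/2)·Σᵢ H(μᵢ), Σᵢ H(μᵢ) − r} ≤ log|B_M| ≤ Σᵢ H(μᵢ), where H(p) = p log(1/p) + (1−p) log(1/(1−p)). -/

import Mathlib

noncomputable def binEntropy (p : ℝ) : ℝ :=
  p * Real.log (1 / p) + (1 - p) * Real.log (1 / (1 - p))

/-!
Upper bound: `log |ℬ|` is the entropy of the uniform distribution on `ℬ`, which by Gibbs'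
inequality is at most its cross entropy against the product of its Bernoulli marginals, and that
cross entropy is `∑ᵢ H(μᵢ)`.

Lower bounds: the points `v_B = 1_B / μ` (`B ∈ ℬ`) average to the all-ones vector on the support,
so log-concavity of the generating polynomial `g` gives
`∏_B (∏_{i ∈ B} μᵢ⁻¹) ^ (1 / |ℬ|) ≤ ∏_B g(v_B) ^ (1 / |ℬ|) ≤ g(1) = |ℬ|`,
i.e. `∑ᵢ -μᵢ log μᵢ ≤ log |ℬ|`. The dual family gives `∑ᵢ -(1 - μᵢ) log (1 - μᵢ) ≤ log |ℬ|`.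
Adding the two yields the `1/2` bound; `-(1 - x) log (1 - x) ≤ x` and `∑ᵢ μᵢ = r` yield the other.
-/

section

open Finset Real
open scoped FinsetFamily

/-- Log-concavity in multiplicative form, so that `f` may vanish. -/
def LogConcaveOn {E : Type*} [AddCommMonoid E] [Module ℝ E] (C : Set E) (f : E → ℝ) : Prop :=
  ∀ ⦃x⦄, x ∈ C → ∀ ⦃y⦄, y ∈ C → ∀ ⦃l : ℝ⦄, 0 ≤ l → l ≤ 1 →
    f x ^ l * f y ^ (1 - l) ≤ f (l • x + (1 - l) • y)

namespace LogConcaveOn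

variable {E κ : Type*} [AddCommGroup E] [Module ℝ E] {C : Set E} {f : E → ℝ}

theorem prod_rpow_le_map_sum (hf : LogConcaveOn C f) (hC : Convex ℝ C)
    (hf₀ : ∀ x ∈ C, 0 ≤ f x) {p : κ → E} (t : Finset κ) {w : κ → ℝ}
    (h₀ : ∀ j ∈ t, 0 ≤ w j) (h₁ : ∑ j ∈ t, w j = 1) (hp : ∀ j ∈ t, p j ∈ C) :
    ∏ j ∈ t, f (p j) ^ w j ≤ f (∑ j ∈ t, w j • p j) := by
  classical
  induction t using Finset.induction_on generalizing w with
  | empty => simp at h₁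
  | @insert a t ha ih =>
    simp only [forall_mem_insert] at h₀ hp
    rw [sum_insert ha] at h₁
    rw [prod_insert ha, sum_insert ha]
    set m := ∑ j ∈ t, w j
    have hm₀ : 0 ≤ m := sum_nonneg h₀.2
    rcases hm₀.eq_or_lt with hm0 | hmpos
    · have hw0 : ∀ j ∈ t, w j = 0 := (sum_eq_zero_iff_of_nonneg h₀.2).1 hm0.symm
      have hwa : w a = 1 := by linarith
      have hsum : ∑ j ∈ t, w j • p j = 0 := sum_eq_zero fun j hj => by rw [hw0 j hj, zero_smul]
      have hprod : ∏ j ∈ t, f (p j) ^ w j = 1 := prod_eq_one fun j hj => by rw [hw0 j hj, rpow_zero]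
      rw [hsum, hprod, hwa, rpow_one, one_smul, mul_one, add_zero]
    · set y := ∑ j ∈ t, (w j / m) • p j
      have hy : y ∈ C := hC.sum_mem (fun j hj => div_nonneg (h₀.2 j hj) hmpos.le)
        (by rw [← sum_div, div_self hmpos.ne']) hp.2
      have hfy : ∏ j ∈ t, f (p j) ^ w j ≤ f y ^ m := calc
        ∏ j ∈ t, f (p j) ^ w j = (∏ j ∈ t, f (p j) ^ (w j / m)) ^ m := by
          rw [← finsetProd_rpow _ _ fun j hj => rpow_nonneg (hf₀ _ (hp.2 j hj)) _]
          exact prod_congr rfl fun j hj => by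
            rw [← rpow_mul (hf₀ _ (hp.2 j hj)), div_mul_cancel₀ _ hmpos.ne']
        _ ≤ f y ^ m := rpow_le_rpow (prod_nonneg fun j hj => rpow_nonneg (hf₀ _ (hp.2 j hj)) _)
          (ih (fun j hj => div_nonneg (h₀.2 j hj) hmpos.le)
            (by rw [← sum_div, div_self hmpos.ne']) hp.2) hm₀
      have hmy : m • y = ∑ j ∈ t, w j • p j := by
        simp only [y, smul_sum, smul_smul, mul_div_cancel₀ _ hmpos.ne']
      have hma : m = 1 - w a := by linarith
      calc f (p a) ^ w a * ∏ j ∈ t, f (p j) ^ w j ≤ f (p a) ^ w a * f y ^ (1 - w a) := by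
            rw [← hma]; exact mul_le_mul_of_nonneg_left hfy (rpow_nonneg (hf₀ _ hp.1) _)
        _ ≤ f (w a • p a + (1 - w a) • y) := hf hp.1 hy h₀.1 (by linarith)
        _ = f (w a • p a + ∑ j ∈ t, w j • p j) := by rw [← hma, hmy]

theorem sum_mul_log_le_log_map_sum (hf : LogConcaveOn C f) (hC : Convex ℝ C)
    (hf₀ : ∀ x ∈ C, 0 ≤ f x) {p : κ → E} (t : Finset κ) {w : κ → ℝ}
    (h₀ : ∀ j ∈ t, 0 ≤ w j) (h₁ : ∑ j ∈ t, w j = 1) (hp : ∀ j ∈ t, p j ∈ C)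
    (hpos : ∀ j ∈ t, 0 < f (p j)) :
    ∑ j ∈ t, w j * log (f (p j)) ≤ log (f (∑ j ∈ t, w j • p j)) := by
  have hpos' : ∀ j ∈ t, 0 < f (p j) ^ w j := fun j hj => rpow_pos_of_pos (hpos j hj) _
  calc ∑ j ∈ t, w j * log (f (p j)) = log (∏ j ∈ t, f (p j) ^ w j) := by
        rw [log_prod fun j hj => (hpos' j hj).ne']
        exact sum_congr rfl fun j hj => (log_rpow (hpos j hj) _).symm
    _ ≤ log (f (∑ j ∈ t, w j • p j)) :=
        log_le_log (prod_pos hpos') (hf.prod_rpow_le_map_sum hC hf₀ t h₀ h₁ hp)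

end LogConcaveOn

variable {ι : Type*} [DecidableEq ι]

noncomputable def marginal (𝒜 : Finset (Finset ι)) (i : ι) : ℝ := #{A ∈ 𝒜 | i ∈ A} / #𝒜

def generatingPoly (𝒜 : Finset (Finset ι)) (v : ι → ℝ) : ℝ := ∑ A ∈ 𝒜, ∏ i ∈ A, v i

lemma marginal_nonneg (𝒜 : Finset (Finset ι)) (i : ι) : 0 ≤ marginal 𝒜 i := by
  unfold marginal; positivity

lemma marginal_le_one (𝒜 : Finset (Finset ι)) (i : ι) : marginal 𝒜 i ≤ 1 :=
  div_le_one_of_le₀ (by exact_mod_cast card_filter_le _ _) (Nat.cast_nonneg _)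

lemma marginal_pos {𝒜 : Finset (Finset ι)} {A : Finset ι} (hA : A ∈ 𝒜) {i : ι} (hi : i ∈ A) :
    0 < marginal 𝒜 i := by
  have : 0 < #{A ∈ 𝒜 | i ∈ A} := card_pos.2 ⟨A, mem_filter.2 ⟨hA, hi⟩⟩
  have : 0 < #𝒜 := card_pos.2 ⟨A, hA⟩
  unfold marginal; positivity

variable [Fintype ι]

lemma sum_marginal_mul (𝒜 : Finset (Finset ι)) (f : ι → ℝ) :
    ∑ i, marginal 𝒜 i * f i = (∑ A ∈ 𝒜, ∑ i ∈ A, f i) / #𝒜 := by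
  simp_rw [marginal, div_mul_eq_mul_div, ← sum_div]
  congr 1
  rw [sum_comm' (t' := univ) (s' := fun i => {A ∈ 𝒜 | i ∈ A}) (by simp)]
  simp [sum_const]

lemma sum_marginal_of_sized {𝒜 : Finset (Finset ι)} (h𝒜 : 𝒜.Nonempty) {r : ℕ}
    (hr : (𝒜 : Set (Finset ι)).Sized r) : ∑ i, marginal 𝒜 i = r := by
  have : (#𝒜 : ℝ) ≠ 0 := by exact_mod_cast h𝒜.card_pos.ne'
  have hsum : ∑ A ∈ 𝒜, ∑ i ∈ A, (1 : ℝ) = #𝒜 * r := by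
    rw [sum_congr rfl fun A hA => by rw [sum_const, hr hA, nsmul_one], sum_const, nsmul_eq_mul]
  simpa only [Pi.one_apply, mul_one, hsum, mul_div_cancel_left₀ _ this] using sum_marginal_mul 𝒜 1

lemma marginal_compls {𝒜 : Finset (Finset ι)} (h𝒜 : 𝒜.Nonempty) (i : ι) :
    marginal 𝒜ᶜˢ i = 1 - marginal 𝒜 i := by
  have hcard : #{A ∈ 𝒜ᶜˢ | i ∈ A} = #{A ∈ 𝒜 | i ∉ A} := by
    rw [compls, filter_map, card_map]; simp
  have hsplit := card_filter_add_card_filter_not (s := 𝒜) (fun A => i ∈ A)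
  have : (#𝒜 : ℝ) ≠ 0 := by exact_mod_cast h𝒜.card_pos.ne'
  rw [marginal, marginal, hcard, card_compls, eq_sub_iff_add_eq, ← add_div, div_eq_one_iff_eq this]
  exact_mod_cast (add_comm _ _).trans hsplit

lemma sum_compls {M : Type*} [AddCommMonoid M] (𝒜 : Finset (Finset ι)) (g : Finset ι → M) :
    ∑ A ∈ 𝒜ᶜˢ, g A = ∑ A ∈ 𝒜, g Aᶜ :=
  sum_map _ _ _

theorem sum_negMulLog_marginal_le_log_card (𝒜 : Finset (Finset ι))
    (h : LogConcaveOn (Set.Ici 0) (generatingPoly 𝒜)) :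
    ∑ i, negMulLog (marginal 𝒜 i) ≤ log #𝒜 := by
  rcases 𝒜.eq_empty_or_nonempty with rfl | h𝒜
  · simp [marginal]
  set ν := marginal 𝒜
  have hN : (0 : ℝ) < #𝒜 := by exact_mod_cast h𝒜.card_pos
  let v : Finset ι → ι → ℝ := fun A i => if i ∈ A then (ν i)⁻¹ else 0
  have hv : ∀ A, v A ∈ Set.Ici 0 := fun A i => by
    dsimp only [v]; split_ifs
    exacts [inv_nonneg.2 (marginal_nonneg 𝒜 i), le_rfl]
  -- `ν i * (ν i)⁻¹` is `0` off the support of `𝒜`, where `generatingPoly 𝒜` does not look.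
  have havg : ∑ A ∈ 𝒜, (#𝒜 : ℝ)⁻¹ • v A = fun i => ν i * (ν i)⁻¹ := by
    ext i
    rw [Finset.sum_apply]
    simp only [Pi.smul_apply, smul_eq_mul, v, ← mul_sum, ← sum_filter, sum_const, nsmul_eq_mul]
    simp only [ν, marginal]
    ring
  have hG : generatingPoly 𝒜 (fun i => ν i * (ν i)⁻¹) = #𝒜 := by
    rw [generatingPoly, sum_congr rfl fun A hA =>
      prod_eq_one fun i hi => mul_inv_cancel₀ (marginal_pos hA hi).ne', sum_const, nsmul_one]
  have hpos : ∀ A ∈ 𝒜, 0 < ∏ i ∈ A, (ν i)⁻¹ := fun A hA =>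
    prod_pos fun i hi => inv_pos.2 (marginal_pos hA hi)
  have hlow : ∀ A ∈ 𝒜, ∏ i ∈ A, (ν i)⁻¹ ≤ generatingPoly 𝒜 (v A) := fun A hA => calc
    ∏ i ∈ A, (ν i)⁻¹ = ∏ i ∈ A, v A i := prod_congr rfl fun i hi => by simp [v, hi]
    _ ≤ generatingPoly 𝒜 (v A) :=
      single_le_sum (f := fun B => ∏ i ∈ B, v A i) (fun B _ => prod_nonneg fun i _ => hv A i) hA
  calc ∑ i, negMulLog (ν i) = ∑ A ∈ 𝒜, (#𝒜 : ℝ)⁻¹ * log (∏ i ∈ A, (ν i)⁻¹) := by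
        simp_rw [negMulLog, neg_mul, ← mul_neg, ← log_inv]
        rw [sum_marginal_mul, div_eq_inv_mul, mul_sum]
        refine sum_congr rfl fun A hA => ?_
        rw [log_prod fun i hi => (inv_pos.2 (marginal_pos hA hi)).ne']
    _ ≤ ∑ A ∈ 𝒜, (#𝒜 : ℝ)⁻¹ * log (generatingPoly 𝒜 (v A)) :=
        sum_le_sum fun A hA => mul_le_mul_of_nonneg_left (log_le_log (hpos A hA) (hlow A hA))
          (by positivity)
    _ ≤ log (generatingPoly 𝒜 (∑ A ∈ 𝒜, (#𝒜 : ℝ)⁻¹ • v A)) :=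
        h.sum_mul_log_le_log_map_sum (convex_Ici 0)
          (fun v hv => sum_nonneg fun A _ => prod_nonneg fun i _ => hv i) 𝒜
          (fun _ _ => by positivity) (by rw [sum_const, nsmul_eq_mul, mul_inv_cancel₀ hN.ne'])
          (fun A _ => hv A) fun A hA => (hpos A hA).trans_le (hlow A hA)
    _ = log #𝒜 := by rw [havg, hG]

lemma sum_prod_mul_prod_compl_le_one (𝒜 : Finset (Finset ι)) {p : ι → ℝ}
    (hp₀ : ∀ i, 0 ≤ p i) (hp₁ : ∀ i, p i ≤ 1) :
    ∑ A ∈ 𝒜, (∏ i ∈ A, p i) * ∏ i ∈ Aᶜ, (1 - p i) ≤ 1 := calc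
  _ ≤ ∑ A, (∏ i ∈ A, p i) * ∏ i ∈ Aᶜ, (1 - p i) := sum_le_univ_sum_of_nonneg fun A =>
    mul_nonneg (prod_nonneg fun i _ => hp₀ i) (prod_nonneg fun i _ => sub_nonneg.2 (hp₁ i))
  _ = ∏ i, (p i + (1 - p i)) := (Fintype.prod_add _ _).symm
  _ = 1 := by simp

theorem log_card_le_sum_binEntropy_marginal {𝒜 : Finset (Finset ι)} (h𝒜 : 𝒜.Nonempty) :
    log #𝒜 ≤ ∑ i, Real.binEntropy (marginal 𝒜 i) := by
  set μ := marginal 𝒜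
  let q : Finset ι → ℝ := fun A => (∏ i ∈ A, μ i) * ∏ i ∈ Aᶜ, (1 - μ i)
  have hN : (0 : ℝ) < #𝒜 := by exact_mod_cast h𝒜.card_pos
  have hμc : ∀ i, 1 - μ i = marginal 𝒜ᶜˢ i := fun i => (marginal_compls h𝒜 i).symm
  have hμ₀ : ∀ A ∈ 𝒜, ∀ i ∈ A, 0 < μ i := fun A hA i hi => marginal_pos hA hi
  have hμ₁ : ∀ A ∈ 𝒜, ∀ i ∈ Aᶜ, 0 < 1 - μ i := fun A hA i hi =>
    hμc i ▸ marginal_pos (compl_mem_compls hA) hi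
  have hq : ∀ A ∈ 𝒜, 0 < q A := fun A hA => mul_pos (prod_pos (hμ₀ A hA)) (prod_pos (hμ₁ A hA))
  have hlogq : ∑ A ∈ 𝒜, (#𝒜 : ℝ)⁻¹ * log (q A) = -∑ i, Real.binEntropy (μ i) := by
    have hsplit : ∀ A ∈ 𝒜, log (q A) = ∑ i ∈ A, log (μ i) + ∑ i ∈ Aᶜ, log (1 - μ i) :=
      fun A hA => by
        rw [log_mul (prod_pos (hμ₀ A hA)).ne' (prod_pos (hμ₁ A hA)).ne',
          log_prod fun i hi => (hμ₀ A hA i hi).ne', log_prod fun i hi => (hμ₁ A hA i hi).ne']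
    have hin : ∑ A ∈ 𝒜, ∑ i ∈ A, log (μ i) = #𝒜 * ∑ i, μ i * log (μ i) := by
      rw [sum_marginal_mul, mul_div_cancel₀ _ hN.ne']
    have hout : ∑ A ∈ 𝒜, ∑ i ∈ Aᶜ, log (1 - μ i) = #𝒜 * ∑ i, (1 - μ i) * log (1 - μ i) := by
      simp_rw [hμc]
      rw [sum_marginal_mul, card_compls, sum_compls, mul_div_cancel₀ _ hN.ne']
    rw [← mul_sum, sum_congr rfl hsplit, sum_add_distrib, hin, hout, ← mul_add,
      inv_mul_cancel_left₀ hN.ne', ← sum_add_distrib, ← sum_neg_distrib]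
    refine sum_congr rfl fun i _ => ?_
    rw [binEntropy_eq_negMulLog_add_negMulLog_one_sub, negMulLog, negMulLog]
    ring
  calc log #𝒜 = -log (#𝒜 : ℝ)⁻¹ := by rw [log_inv, neg_neg]
    _ ≤ -log (∑ A ∈ 𝒜, (#𝒜 : ℝ)⁻¹ * q A) := by
        refine neg_le_neg (log_le_log (sum_pos (fun A hA => by have := hq A hA; positivity) h𝒜) ?_)
        rw [← mul_sum]
        exact mul_le_of_le_one_right (by positivity)
          (sum_prod_mul_prod_compl_le_one 𝒜 (marginal_nonneg 𝒜) (marginal_le_one 𝒜))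
    _ ≤ -∑ A ∈ 𝒜, (#𝒜 : ℝ)⁻¹ * log (q A) :=
        neg_le_neg (strictConcaveOn_log_Ioi.concaveOn.le_map_sum (fun _ _ => by positivity)
          (by rw [sum_const, nsmul_eq_mul, mul_inv_cancel₀ hN.ne']) hq)
    _ = ∑ i, Real.binEntropy (μ i) := by rw [hlogq, neg_neg]

end

theorem binEntropy_eq_real_binEntropy (p : ℝ) : binEntropy p = Real.binEntropy p := by
  simp [binEntropy, Real.binEntropy]

theorem matroid_basis_counting_general
    {n r : ℕ}
    (ℬ : Finset (Finset (Fin n)))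
    (hne : ℬ.Nonempty)
    (hrank : ∀ B ∈ ℬ, B.card = r)
    (μ : Fin n → ℝ)
    (hμ : ∀ i, μ i = ((ℬ.filter (fun B => i ∈ B)).card : ℝ) / (ℬ.card : ℝ))
    (hlc : ∀ v w : Fin n → ℝ, (∀ i, 0 ≤ v i) → (∀ i, 0 ≤ w i) →
      ∀ l : ℝ, 0 ≤ l → l ≤ 1 →
        (∑ B ∈ ℬ, ∏ i ∈ B, v i) ^ l * (∑ B ∈ ℬ, ∏ i ∈ B, w i) ^ (1 - l) ≤
          ∑ B ∈ ℬ, ∏ i ∈ B, (l • v + (1 - l) • w) i)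
    (hlcdual : ∀ v w : Fin n → ℝ, (∀ i, 0 ≤ v i) → (∀ i, 0 ≤ w i) →
      ∀ l : ℝ, 0 ≤ l → l ≤ 1 →
        (∑ B ∈ ℬ, ∏ i ∈ Bᶜ, v i) ^ l * (∑ B ∈ ℬ, ∏ i ∈ Bᶜ, w i) ^ (1 - l) ≤
          ∑ B ∈ ℬ, ∏ i ∈ Bᶜ, (l • v + (1 - l) • w) i) :
    max ((1 / 2) * ∑ i : Fin n, binEntropy (μ i))
        ((∑ i : Fin n, binEntropy (μ i)) - r) ≤ Real.log (ℬ.card : ℝ) ∧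
      Real.log (ℬ.card : ℝ) ≤ ∑ i : Fin n, binEntropy (μ i) := by
  obtain rfl : μ = marginal ℬ := funext hμ
  have hin := sum_negMulLog_marginal_le_log_card ℬ fun v hv w hw l h₀ h₁ => hlc v w hv hw l h₀ h₁
  have hout : ∑ i, Real.negMulLog (1 - marginal ℬ i) ≤ Real.log ℬ.card := by
    simpa only [marginal_compls hne, Finset.card_compls] using
      sum_negMulLog_marginal_le_log_card ℬ.compls fun v hv w hw l h₀ h₁ => by
        simpa only [generatingPoly, sum_compls] using hlcdual v w hv hw l h₀ h₁
  have hout_le_rank : ∑ i, Real.negMulLog (1 - marginal ℬ i) ≤ r := by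
    rw [← sum_marginal_of_sized hne fun B hB => hrank B hB]
    exact Finset.sum_le_sum fun i _ => (Real.negMulLog_le_one_sub_self
      (sub_nonneg.2 (marginal_le_one ℬ i))).trans_eq (sub_sub_cancel _ _)
  have hupper := log_card_le_sum_binEntropy_marginal hne
  simp only [binEntropy_eq_real_binEntropy, Real.binEntropy_eq_negMulLog_add_negMulLog_one_sub,
    Finset.sum_add_distrib] at hupper ⊢
  exact ⟨max_le (by linarith) (by linarith), hupper⟩

/-- **Counting bases of a matroid via marginal entropies.** Let `M` be a matroid of rank
`r` on ground set `[n]`, let `ℬ` be its (nonempty) finite set of bases, and let `μᵢ` be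
the marginals of the uniform distribution over `ℬ`. Assuming the basis generating
polynomials of `M` and of its dual are log-concave on the positive orthant, we have
`max{(1/2) ∑ᵢ H(μᵢ), ∑ᵢ H(μᵢ) − r} ≤ log |ℬ| ≤ ∑ᵢ H(μᵢ)`. -/
theorem matroid_basis_counting
    {n r : ℕ} (M : Matroid (Fin n)) (hE : M.E = Set.univ)
    (ℬ : Finset (Finset (Fin n)))
    (hℬ : ∀ S : Finset (Fin n), S ∈ ℬ ↔ M.IsBase (S : Set (Fin n)))
    (hne : ℬ.Nonempty)
    (hrank : ∀ B ∈ ℬ, B.card = r)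
    (μ : Fin n → ℝ)
    (hμ : ∀ i, μ i = ((ℬ.filter (fun B => i ∈ B)).card : ℝ) / (ℬ.card : ℝ))
    (hlc : ∀ v w : Fin n → ℝ, (∀ i, 0 ≤ v i) → (∀ i, 0 ≤ w i) →
      ∀ l : ℝ, 0 ≤ l → l ≤ 1 →
        (∑ B ∈ ℬ, ∏ i ∈ B, v i) ^ l * (∑ B ∈ ℬ, ∏ i ∈ B, w i) ^ (1 - l) ≤
          ∑ B ∈ ℬ, ∏ i ∈ B, (l • v + (1 - l) • w) i)
    (hlcdual : ∀ v w : Fin n → ℝ, (∀ i, 0 ≤ v i) → (∀ i, 0 ≤ w i) →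
      ∀ l : ℝ, 0 ≤ l → l ≤ 1 →
        (∑ B ∈ ℬ, ∏ i ∈ Bᶜ, v i) ^ l * (∑ B ∈ ℬ, ∏ i ∈ Bᶜ, w i) ^ (1 - l) ≤
          ∑ B ∈ ℬ, ∏ i ∈ Bᶜ, (l • v + (1 - l) • w) i) :
    max ((1 / 2) * ∑ i : Fin n, binEntropy (μ i))
        ((∑ i : Fin n, binEntropy (μ i)) - r) ≤ Real.log (ℬ.card : ℝ) ∧
      Real.log (ℬ.card : ℝ) ≤ ∑ i : Fin n, binEntropy (μ i) :=
  matroid_basis_counting_general ℬ hne hrank μ hμ hlc hlcdual
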